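/- For all integers n and k with 0 ≤ k ≤ n, Σ_{π ∈ OP(n,k)} q^{LCB(π)} = [k]!·S_q[n,k], where LCB(π) = lcb(π) + C(k,2). -/
import Mathlib


/-- The indeterminate `q`, as an element of the field of rational functions over `ℚ`. -/
noncomputable def qq : RatFunc ℚ := RatFunc.X

/-- The q-integer `[m] = 1 + q + ⋯ + q^(m-1)`. -/
noncomputable def qint (m : ℕ) : RatFunc ℚ := ∑ j ∈ Finset.range m, qq ^ j

/-- The q-factorial `[m]! = [m][m-1]⋯[1]`, with `[0]! = 1`. -/
noncomputable def qfac : ℕ → RatFunc ℚ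
  | 0 => 1
  | m + 1 => qint (m + 1) * qfac m

/-- The Gaussian binomial coefficient `[a]!/([b]!·[a-b]!)` (zero if `b > a`). -/
noncomputable def qbinom (a b : ℕ) : RatFunc ℚ :=
  if b ≤ a then qfac a / (qfac b * qfac (a - b)) else 0

/-- The q-Stirling number of the second kind. -/
noncomputable def qStirling (n k : ℕ) : RatFunc ℚ :=
  if k ≤ n then
    (∑ i ∈ Finset.range (k + 1),
      (-1 : RatFunc ℚ) ^ i * qbinom k i * qq ^ Nat.choose i 2 * qint (k - i) ^ n) / qfac k
  else 0

/-- Ordered partitions of `{1,…,n}` (encoded as `Fin n`) into `k` blocks: sequences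
`(B_1,…,B_k)` of pairwise disjoint nonempty subsets whose union is everything, i.e.
every letter lies in exactly one block. -/
def OP (n k : ℕ) : Finset (Fin k → Finset (Fin n)) :=
  Finset.univ.filter fun B =>
    (∀ j, (B j).Nonempty) ∧ ∀ x : Fin n, ∃ j, x ∈ B j ∧ ∀ j', x ∈ B j' → j' = j

/-- `ros(π)`: the number of pairs `(i,j)` of letters with `j < i`, `j` the opener
(least element) of its block, and the block of `j` strictly to the right of the
block of `i`. -/
def ros {n k : ℕ} (B : Fin k → Finset (Fin n)) : ℕ :=
  ((Finset.univ : Finset (Fin n × Fin n)).filter fun ij =>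
    ij.2 < ij.1 ∧ ∃ a b : Fin k, ij.1 ∈ B a ∧ ij.2 ∈ B b ∧ (B b).min = ↑ij.2 ∧ a < b).card

/-- `rcb(π)`: pairs `(i,j)` with `j > i`, `j` the closer (greatest element) of its block,
and the block of `j` strictly to the right of the block of `i`. -/
def rcb {n k : ℕ} (B : Fin k → Finset (Fin n)) : ℕ :=
  ((Finset.univ : Finset (Fin n × Fin n)).filter fun ij =>
    ij.1 < ij.2 ∧ ∃ a b : Fin k, ij.1 ∈ B a ∧ ij.2 ∈ B b ∧ (B b).max = ↑ij.2 ∧ a < b).card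

/-- `los(π)`: pairs `(i,j)` with `j < i`, `j` the opener of its block, and the block of
`j` strictly to the left of the block of `i`. -/
def los {n k : ℕ} (B : Fin k → Finset (Fin n)) : ℕ :=
  ((Finset.univ : Finset (Fin n × Fin n)).filter fun ij =>
    ij.2 < ij.1 ∧ ∃ a b : Fin k, ij.1 ∈ B a ∧ ij.2 ∈ B b ∧ (B b).min = ↑ij.2 ∧ b < a).card

/-- `lcb(π)`: pairs `(i,j)` with `j > i`, `j` the closer of its block, and the block of
`j` strictly to the left of the block of `i`. -/
def lcb {n k : ℕ} (B : Fin k → Finset (Fin n)) : ℕ :=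
  ((Finset.univ : Finset (Fin n × Fin n)).filter fun ij =>
    ij.1 < ij.2 ∧ ∃ a b : Fin k, ij.1 ∈ B a ∧ ij.2 ∈ B b ∧ (B b).max = ↑ij.2 ∧ b < a).card

open Finset

lemma qint_ne_zero {m : ℕ} (hm : 0 < m) : qint m ≠ 0 := by
  have : qint m = algebraMap (Polynomial ℚ) (RatFunc ℚ)
      (∑ j ∈ Finset.range m, Polynomial.X ^ j) := by
    rw [map_sum]
    refine Finset.sum_congr rfl fun j _ => ?_
    rw [map_pow, RatFunc.algebraMap_X, qq]
  rw [this]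
  intro h
  have h0 : (∑ j ∈ Finset.range m, (Polynomial.X : Polynomial ℚ) ^ j) = 0 :=
    RatFunc.algebraMap_injective ℚ (by simpa using h)
  have : ((∑ j ∈ Finset.range m, (Polynomial.X : Polynomial ℚ) ^ j)).coeff 0 = 1 := by
    rw [Polynomial.finset_sum_coeff]
    rw [Finset.sum_eq_single 0]
    · simp
    · intro b _ hb; simp [Polynomial.coeff_X_pow, hb.symm]
    · intro h; exact absurd (Finset.mem_range.2 hm) h
  rw [h0] at this
  simp at this

lemma qfac_ne_zero (m : ℕ) : qfac m ≠ 0 := by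
  induction m with
  | zero => simp [qfac]
  | succ m ih => exact mul_ne_zero (qint_ne_zero (Nat.succ_pos m)) ih

lemma qint_add (a b : ℕ) : qint (a + b) = qint a + qq ^ a * qint b := by
  rw [qint, qint, qint, Finset.sum_range_add, Finset.mul_sum]
  congr 1
  exact Finset.sum_congr rfl fun j _ => (pow_add qq a j)

lemma qbinom_self (a : ℕ) : qbinom a a = 1 := by
  rw [qbinom, if_pos le_rfl, Nat.sub_self, show qfac 0 = 1 from rfl]
  field_simp [qfac_ne_zero]

lemma qbinom_zero (a : ℕ) : qbinom a 0 = 1 := by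
  rw [qbinom, if_pos (Nat.zero_le a), Nat.sub_zero, show qfac 0 = 1 from rfl]
  field_simp [qfac_ne_zero]

lemma qbinom_of_gt {a b : ℕ} (h : a < b) : qbinom a b = 0 := by
  rw [qbinom, if_neg (by omega)]

lemma qbinom_pascal (m j : ℕ) (h : j ≤ m) :
    qbinom (m + 1) (j + 1) = qbinom m (j + 1) + qq ^ (m - j) * qbinom m j := by
  obtain ⟨d, rfl⟩ := Nat.exists_eq_add_of_le h
  rcases d with _ | e
  · simp [qbinom_self, qbinom_of_gt (Nat.lt_succ_self j)]
  · have h1 : qint (j + (e+1) + 1) = qint (e + 1) + qq ^ (e + 1) * qint (j + 1) := by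
      have := qint_add (e + 1) (j + 1)
      rw [show e + 1 + (j + 1) = j + (e + 1) + 1 by ring] at this
      exact this
    have e1 : j + (e + 1) + 1 - (j + 1) = e + 1 := by omega
    have e2 : j + (e + 1) - (j + 1) = e := by omega
    have e3 : j + (e + 1) - j = e + 1 := by omega
    rw [qbinom, qbinom, qbinom, if_pos (by omega), if_pos (by omega), if_pos (by omega),
      e1, e2, e3]
    rw [show j + (e + 1) + 1 = (j + (e+1)) + 1 from rfl, show (qfac ((j + (e+1)) + 1)) = qint ((j+(e+1))+1) * qfac (j + (e+1)) from rfl,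
      show qfac (e + 1) = qint (e+1) * qfac e from rfl,
      show qfac (j + 1) = qint (j+1) * qfac j from rfl, h1]
    have hj := qfac_ne_zero j
    have he := qfac_ne_zero e
    have hje := qfac_ne_zero (j + (e + 1))
    have hij := qint_ne_zero (Nat.succ_pos j)
    have hie := qint_ne_zero (Nat.succ_pos e)
    field_simp

lemma qint_mul_qbinom (k i : ℕ) (h : i ≤ k) :
    qint (i + 1) * qbinom (k + 1) (i + 1) = qint (k + 1) * qbinom k i := by
  rw [qbinom, qbinom, if_pos (by omega), if_pos h, Nat.succ_sub_succ,
    show qfac (k + 1) = qint (k+1) * qfac k from rfl,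
    show qfac (i + 1) = qint (i+1) * qfac i from rfl]
  have := qfac_ne_zero i
  have := qfac_ne_zero k
  have := qfac_ne_zero (k - i)
  have := qint_ne_zero (Nat.succ_pos i)
  field_simp

noncomputable def TT (n k : ℕ) : RatFunc ℚ :=
  ∑ i ∈ Finset.range (k + 1),
    (-1 : RatFunc ℚ) ^ i * qbinom k i * qq ^ Nat.choose i 2 * qint (k - i) ^ n

lemma choose_two_succ (i : ℕ) : Nat.choose (i + 1) 2 = Nat.choose i 2 + i := by
  simp [Nat.choose_succ_succ, Nat.choose_one_right]
  omega
  
lemma TT_zero_zero : TT 0 0 = 1 := by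
  simp [TT, qbinom_zero]

lemma qint_zero : qint 0 = 0 := by simp [qint]

lemma TT_zero_rec (k : ℕ) : TT 0 (k + 1) = (1 - qq ^ k) * TT 0 k := by
  have hsplit : TT 0 (k + 1) =
      (∑ i ∈ Finset.range (k + 1),
        (-1 : RatFunc ℚ) ^ (i+1) * qbinom (k+1) (i+1) * qq ^ Nat.choose (i+1) 2 * qint (k + 1 - (i+1)) ^ 0)
      + (-1 : RatFunc ℚ) ^ 0 * qbinom (k+1) 0 * qq ^ Nat.choose 0 2 * qint (k + 1 - 0) ^ 0 := by
    rw [TT]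
    exact Finset.sum_range_succ' _ (k + 1)
  have hstep : ∀ i ∈ Finset.range (k + 1),
      (-1 : RatFunc ℚ) ^ (i+1) * qbinom (k+1) (i+1) * qq ^ Nat.choose (i+1) 2 * qint (k + 1 - (i+1)) ^ 0
      = ((-1 : RatFunc ℚ) ^ (i+1) * qbinom k (i+1) * qq ^ Nat.choose (i+1) 2 * qint (k - (i+1)) ^ 0)
        + (- qq ^ k) * ((-1 : RatFunc ℚ) ^ i * qbinom k i * qq ^ Nat.choose i 2 * qint (k - i) ^ 0) := by
    intro i hi
    have hik : i ≤ k := Nat.lt_succ_iff.1 (Finset.mem_range.1 hi)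
    have hpow : qq ^ (k - i) * qq ^ i = qq ^ k := by
      rw [← pow_add]; congr 1; omega
    rw [qbinom_pascal k i hik, choose_two_succ, pow_add]
    simp only [pow_zero, mul_one]
    linear_combination ((-1 : RatFunc ℚ) ^ (i+1) * qbinom k i * qq ^ Nat.choose i 2) * hpow
  rw [hsplit, Finset.sum_congr rfl hstep, Finset.sum_add_distrib, ← Finset.mul_sum]
  have h0 : (-1 : RatFunc ℚ) ^ 0 * qbinom (k+1) 0 * qq ^ Nat.choose 0 2 * qint (k + 1 - 0) ^ 0
      = (-1 : RatFunc ℚ) ^ 0 * qbinom k 0 * qq ^ Nat.choose 0 2 * qint (k - 0) ^ 0 := by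
    simp [qbinom_zero]
  rw [h0]
  rw [add_right_comm, ← Finset.sum_range_succ'
    (fun i => (-1 : RatFunc ℚ) ^ i * qbinom k i * qq ^ Nat.choose i 2 * qint (k - i) ^ 0) (k + 1),
    Finset.sum_range_succ, qbinom_of_gt (Nat.lt_succ_self k)]
  have hTT0 : TT 0 k = ∑ i ∈ Finset.range (k + 1),
      (-1 : RatFunc ℚ) ^ i * qbinom k i * qq ^ Nat.choose i 2 * qint (k - i) ^ 0 := rfl
  rw [← hTT0]
  ring

lemma TT_zero_succ (k : ℕ) : TT 0 (k + 1) = 0 := by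
  induction k with
  | zero => rw [TT_zero_rec, TT_zero_zero]; simp
  | succ k ih => rw [TT_zero_rec, ih, mul_zero]

lemma TT_rec (n k : ℕ) :
    TT (n + 1) (k + 1) = qq ^ k * qint (k + 1) * TT n k + qint (k + 1) * TT n (k + 1) := by
  have hterm : ∀ i ∈ Finset.range (k + 2),
      (-1 : RatFunc ℚ) ^ i * qbinom (k+1) i * qq ^ Nat.choose i 2 * qint (k + 1 - i) ^ (n + 1)
      = qint (k + 1) * ((-1 : RatFunc ℚ) ^ i * qbinom (k+1) i * qq ^ Nat.choose i 2 * qint (k + 1 - i) ^ n)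
        - qq ^ (k + 1 - i) * qint i * ((-1 : RatFunc ℚ) ^ i * qbinom (k+1) i * qq ^ Nat.choose i 2 * qint (k + 1 - i) ^ n) := by
    intro i hi
    have hik : i ≤ k + 1 := Nat.lt_succ_iff.1 (Finset.mem_range.1 hi)
    have hq : qint (k + 1) = qint (k + 1 - i) + qq ^ (k + 1 - i) * qint i := by
      have := qint_add (k + 1 - i) i
      rw [show k + 1 - i + i = k + 1 by omega] at this
      exact this
    rw [pow_succ]
    linear_combination (-((-1 : RatFunc ℚ) ^ i * qbinom (k+1) i * qq ^ Nat.choose i 2 * qint (k + 1 - i) ^ n)) * hq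
  have h1 : TT (n + 1) (k + 1) = qint (k + 1) * TT n (k + 1)
      - ∑ i ∈ Finset.range (k + 2),
          qq ^ (k + 1 - i) * qint i * ((-1 : RatFunc ℚ) ^ i * qbinom (k+1) i * qq ^ Nat.choose i 2 * qint (k + 1 - i) ^ n) := by
    rw [TT, show k + 1 + 1 = k + 2 from rfl, Finset.sum_congr rfl hterm, Finset.sum_sub_distrib,
      ← Finset.mul_sum]
    rw [TT, show k + 1 + 1 = k + 2 from rfl]
  have h2 : ∑ i ∈ Finset.range (k + 2),
      qq ^ (k + 1 - i) * qint i * ((-1 : RatFunc ℚ) ^ i * qbinom (k+1) i * qq ^ Nat.choose i 2 * qint (k + 1 - i) ^ n)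
      = ∑ i ∈ Finset.range (k + 1),
          qq ^ (k + 1 - (i+1)) * qint (i+1) * ((-1 : RatFunc ℚ) ^ (i+1) * qbinom (k+1) (i+1) * qq ^ Nat.choose (i+1) 2 * qint (k + 1 - (i+1)) ^ n)
        + qq ^ (k + 1 - 0) * qint 0 * ((-1 : RatFunc ℚ) ^ 0 * qbinom (k+1) 0 * qq ^ Nat.choose 0 2 * qint (k + 1 - 0) ^ n) :=
    Finset.sum_range_succ' _ (k + 1)
  have h3 : ∀ i ∈ Finset.range (k + 1),
      qq ^ (k + 1 - (i+1)) * qint (i+1) * ((-1 : RatFunc ℚ) ^ (i+1) * qbinom (k+1) (i+1) * qq ^ Nat.choose (i+1) 2 * qint (k + 1 - (i+1)) ^ n)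
      = -(qq ^ k * qint (k + 1) * ((-1 : RatFunc ℚ) ^ i * qbinom k i * qq ^ Nat.choose i 2 * qint (k - i) ^ n)) := by
    intro i hi
    have hik : i ≤ k := Nat.lt_succ_iff.1 (Finset.mem_range.1 hi)
    have hsub : k + 1 - (i + 1) = k - i := by omega
    have hpow : qq ^ (k - i) * qq ^ i = qq ^ k := by
      rw [← pow_add]; congr 1; omega
    rw [hsub, choose_two_succ, pow_add qq (Nat.choose i 2) i]
    have hmul := qint_mul_qbinom k i hik
    calc qq ^ (k - i) * qint (i+1) * ((-1 : RatFunc ℚ) ^ (i+1) * qbinom (k+1) (i+1) * (qq ^ Nat.choose i 2 * qq ^ i) * qint (k - i) ^ n)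
        = (qq ^ (k - i) * qq ^ i) * ((-1 : RatFunc ℚ) ^ (i+1) * (qint (i+1) * qbinom (k+1) (i+1)) * qq ^ Nat.choose i 2 * qint (k - i) ^ n) := by ring
      _ = -(qq ^ k * qint (k + 1) * ((-1 : RatFunc ℚ) ^ i * qbinom k i * qq ^ Nat.choose i 2 * qint (k - i) ^ n)) := by
          rw [hpow, hmul]; ring
  rw [h1, h2, Finset.sum_congr rfl h3, qint_zero, Finset.sum_neg_distrib, ← Finset.mul_sum]
  have hTT : TT n k = ∑ i ∈ Finset.range (k + 1),
      (-1 : RatFunc ℚ) ^ i * qbinom k i * qq ^ Nat.choose i 2 * qint (k - i) ^ n := rfl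
  rw [← hTT]
  ring

lemma TT_eq_zero {n k : ℕ} (h : n < k) : TT n k = 0 := by
  induction n generalizing k with
  | zero =>
    cases k with
    | zero => omega
    | succ k => exact TT_zero_succ k
  | succ n ih =>
    cases k with
    | zero => omega
    | succ k =>
      rw [TT_rec, ih (by omega), ih (by omega), mul_zero, mul_zero, add_zero]

section Comb

variable {n k : ℕ}

lemma mem_OP {B : Fin k → Finset (Fin n)} :
    B ∈ OP n k ↔ (∀ j, (B j).Nonempty) ∧
      ∀ x : Fin n, ∃ j, x ∈ B j ∧ ∀ j', x ∈ B j' → j' = j := by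
  simp [OP]

lemma OP_block_unique {B : Fin k → Finset (Fin n)} (hB : B ∈ OP n k) {x : Fin n}
    {a b : Fin k} (ha : x ∈ B a) (hb : x ∈ B b) : a = b := by
  obtain ⟨j, _, huniq⟩ := (mem_OP.1 hB).2 x
  rw [huniq a ha, huniq b hb]

lemma finset_max_eq {α : Type*} [LinearOrder α] {s : Finset α} {a : α} :
    s.max = (a : WithBot α) ↔ a ∈ s ∧ ∀ b ∈ s, b ≤ a := by
  constructor
  · intro h
    refine ⟨Finset.mem_of_max h, fun b hb => ?_⟩
    have := Finset.le_max hb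
    rw [h] at this
    exact_mod_cast this
  · rintro ⟨ha, hb⟩
    exact le_antisymm (Finset.max_le fun b hb' => WithBot.coe_le_coe.2 (hb b hb'))
      (Finset.le_max ha)

lemma succEmb_apply (x : Fin n) : (Fin.succEmb n) x = x.succ := rfl

lemma zero_notMem_map {s : Finset (Fin n)} : (0 : Fin (n+1)) ∉ s.map (Fin.succEmb n) := by
  simp only [Finset.mem_map, succEmb_apply]
  rintro ⟨x, _, hx⟩
  exact Fin.succ_ne_zero x hx

lemma max_map_succ {s : Finset (Fin n)} {y : Fin n} :
    (s.map (Fin.succEmb n)).max = ((y.succ : Fin (n+1)) : WithBot (Fin (n+1))) ↔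
      s.max = (y : WithBot (Fin n)) := by
  rw [finset_max_eq, finset_max_eq]
  constructor
  · rintro ⟨h1, h2⟩
    refine ⟨(Finset.mem_map' _).1 h1, fun b hb => ?_⟩
    exact Fin.succ_le_succ_iff.1 (h2 b.succ ((Finset.mem_map' _).2 hb))
  · rintro ⟨h1, h2⟩
    refine ⟨(Finset.mem_map' _).2 h1, fun b hb => ?_⟩
    obtain ⟨c, hc, rfl⟩ := Finset.mem_map.1 hb
    exact Fin.succ_le_succ_iff.2 (h2 c hc)

/-! ### ins2 : add the letter 0 to block b -/

def ins2 (b : Fin k) (B : Fin k → Finset (Fin n)) : Fin k → Finset (Fin (n+1)) :=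
  fun j => if j = b then insert 0 ((B j).map (Fin.succEmb n)) else (B j).map (Fin.succEmb n)

lemma succ_mem_ins2 {b j : Fin k} {B : Fin k → Finset (Fin n)} {y : Fin n} :
    y.succ ∈ ins2 b B j ↔ y ∈ B j := by
  unfold ins2
  split
  · rw [Finset.mem_insert]
    simp [Fin.succ_ne_zero y, Finset.mem_map', succEmb_apply]
  · exact Finset.mem_map' _

lemma zero_mem_ins2 {b j : Fin k} {B : Fin k → Finset (Fin n)} :
    (0 : Fin (n+1)) ∈ ins2 b B j ↔ j = b := by
  unfold ins2
  split
  · simp [*]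
  · simp only [Finset.mem_map, succEmb_apply, *]
    simp only [iff_false, *]
    rintro ⟨x, _, hx⟩
    exact Fin.succ_ne_zero x hx

lemma mem_ins2 {b j : Fin k} {B : Fin k → Finset (Fin n)} {x : Fin (n+1)} (hx : x ∈ ins2 b B j) :
    x = 0 ∨ ∃ y : Fin n, x = y.succ ∧ y ∈ B j := by
  rcases eq_or_ne x 0 with h | h
  · exact Or.inl h
  · obtain ⟨y, rfl⟩ := Fin.exists_succ_eq_of_ne_zero h
    exact Or.inr ⟨y, rfl, succ_mem_ins2.1 hx⟩

lemma ins2_nonempty {b j : Fin k} {B : Fin k → Finset (Fin n)} (h : (B j).Nonempty) :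
    (ins2 b B j).Nonempty := by
  unfold ins2
  split
  · exact Finset.insert_nonempty _ _
  · exact h.map

lemma ins2_mem_OP {b : Fin k} {B : Fin k → Finset (Fin n)} (hB : B ∈ OP n k) :
    ins2 b B ∈ OP (n+1) k := by
  obtain ⟨hne, hcov⟩ := mem_OP.1 hB
  refine mem_OP.2 ⟨fun j => ins2_nonempty (hne j), fun x => ?_⟩
  induction x using Fin.cases with
  | zero => exact ⟨b, zero_mem_ins2.2 rfl, fun j' hj' => zero_mem_ins2.1 hj'⟩
  | succ y =>
    obtain ⟨a, ha, huniq⟩ := hcov y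
    exact ⟨a, succ_mem_ins2.2 ha, fun j' hj' => huniq j' (succ_mem_ins2.1 hj')⟩

lemma max_ins2 {b j : Fin k} {B : Fin k → Finset (Fin n)} {y : Fin n} :
    (ins2 b B j).max = ((y.succ : Fin (n+1)) : WithBot (Fin (n+1))) ↔
      (B j).max = (y : WithBot (Fin n)) := by
  rw [finset_max_eq, finset_max_eq]
  constructor
  · rintro ⟨h1, h2⟩
    exact ⟨succ_mem_ins2.1 h1, fun z hz => Fin.succ_le_succ_iff.1 (h2 z.succ (succ_mem_ins2.2 hz))⟩
  · rintro ⟨h1, h2⟩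
    refine ⟨succ_mem_ins2.2 h1, fun z hz => ?_⟩
    rcases mem_ins2 hz with rfl | ⟨w, rfl, hw⟩
    · exact Fin.zero_le _
    · exact Fin.succ_le_succ_iff.2 (h2 w hw)

/-! ### ins1 : insert the singleton block {0} at position b -/

def ins1 (b : Fin (k+1)) (B : Fin k → Finset (Fin n)) : Fin (k+1) → Finset (Fin (n+1)) :=
  b.insertNth {0} (fun i => (B i).map (Fin.succEmb n))

lemma ins1_apply_same {b : Fin (k+1)} {B : Fin k → Finset (Fin n)} :
    ins1 b B b = {0} := Fin.insertNth_apply_same b _ _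

lemma ins1_apply_succAbove {b : Fin (k+1)} {B : Fin k → Finset (Fin n)} {i : Fin k} :
    ins1 b B (b.succAbove i) = (B i).map (Fin.succEmb n) :=
  Fin.insertNth_apply_succAbove b _ _ i

lemma zero_mem_ins1 {b j : Fin (k+1)} {B : Fin k → Finset (Fin n)} :
    (0 : Fin (n+1)) ∈ ins1 b B j ↔ j = b := by
  rcases eq_or_ne j b with rfl | h
  · simp [ins1_apply_same]
  · obtain ⟨i, rfl⟩ := Fin.exists_succAbove_eq h
    rw [ins1_apply_succAbove]
    simp only [Fin.succAbove_ne b i, iff_false]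
    exact zero_notMem_map

lemma succ_mem_ins1 {b : Fin (k+1)} {B : Fin k → Finset (Fin n)} {i : Fin k} {y : Fin n} :
    y.succ ∈ ins1 b B (b.succAbove i) ↔ y ∈ B i := by
  rw [ins1_apply_succAbove]; exact Finset.mem_map' _

lemma succ_notMem_ins1_same {b : Fin (k+1)} {B : Fin k → Finset (Fin n)} {y : Fin n} :
    y.succ ∉ ins1 b B b := by
  rw [ins1_apply_same, Finset.mem_singleton]
  exact Fin.succ_ne_zero y

lemma ins1_mem_OP {b : Fin (k+1)} {B : Fin k → Finset (Fin n)} (hB : B ∈ OP n k) :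
    ins1 b B ∈ OP (n+1) (k+1) := by
  obtain ⟨hne, hcov⟩ := mem_OP.1 hB
  refine mem_OP.2 ⟨fun j => ?_, fun x => ?_⟩
  · rcases eq_or_ne j b with rfl | h
    · rw [ins1_apply_same]; exact Finset.singleton_nonempty _
    · obtain ⟨i, rfl⟩ := Fin.exists_succAbove_eq h
      rw [ins1_apply_succAbove]; exact (hne i).map
  · induction x using Fin.cases with
    | zero => exact ⟨b, zero_mem_ins1.2 rfl, fun j' hj' => zero_mem_ins1.1 hj'⟩
    | succ y =>
      obtain ⟨a, ha, huniq⟩ := hcov y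
      refine ⟨b.succAbove a, succ_mem_ins1.2 ha, fun j' hj' => ?_⟩
      rcases eq_or_ne j' b with rfl | h
      · exact absurd hj' succ_notMem_ins1_same
      · obtain ⟨i, rfl⟩ := Fin.exists_succAbove_eq h
        rw [huniq i (succ_mem_ins1.1 hj')]

lemma max_ins1 {b : Fin (k+1)} {B : Fin k → Finset (Fin n)} {i : Fin k} {y : Fin n} :
    (ins1 b B (b.succAbove i)).max = ((y.succ : Fin (n+1)) : WithBot (Fin (n+1))) ↔
      (B i).max = (y : WithBot (Fin n)) := by
  rw [ins1_apply_succAbove]; exact max_map_succ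

/-! ### lcb computations -/

def lcbSet {n k : ℕ} (B : Fin k → Finset (Fin n)) : Finset (Fin n × Fin n) :=
  (Finset.univ : Finset (Fin n × Fin n)).filter fun ij =>
    ij.1 < ij.2 ∧ ∃ a b : Fin k, ij.1 ∈ B a ∧ ij.2 ∈ B b ∧ (B b).max = ↑ij.2 ∧ b < a

lemma lcb_eq (B : Fin k → Finset (Fin n)) : lcb B = (lcbSet B).card := rfl

lemma mem_lcbSet {B : Fin k → Finset (Fin n)} {ij : Fin n × Fin n} :
    ij ∈ lcbSet B ↔
      ij.1 < ij.2 ∧ ∃ a c : Fin k, ij.1 ∈ B a ∧ ij.2 ∈ B c ∧ (B c).max = ↑ij.2 ∧ c < a := by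
  simp [lcbSet]

lemma lcb_ins2 {b : Fin k} {B : Fin k → Finset (Fin n)} (hB : B ∈ OP n k) :
    lcb (ins2 b B) = lcb B + (b : ℕ) := by
  classical
  have hne : ∀ j, (ins2 b B j).Nonempty := (mem_OP.1 (ins2_mem_OP (b := b) hB)).1
  rw [lcb_eq, lcb_eq,
    ← Finset.card_filter_add_card_filter_not (s := lcbSet (ins2 b B))
      (p := fun ij => ij.1 = 0)]
  have h1 : ((lcbSet (ins2 b B)).filter fun ij => ij.1 = 0).card = (b : ℕ) := by
    rw [← Fin.card_Iio b]
    refine (Finset.card_bij (fun c _ => ((0 : Fin (n+1)), (ins2 b B c).max' (hne c)))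
      ?_ ?_ ?_).symm
    · intro c hc
      have hcb : c < b := Finset.mem_Iio.1 hc
      have hmem : (ins2 b B c).max' (hne c) ∈ ins2 b B c := Finset.max'_mem _ _
      have hmax : (ins2 b B c).max = ↑((ins2 b B c).max' (hne c)) :=
        (Finset.coe_max' (hne c)).symm
      have hm0 : (ins2 b B c).max' (hne c) ≠ 0 := by
        intro h
        rw [h] at hmem
        exact absurd (zero_mem_ins2.1 hmem) (ne_of_lt hcb)
      refine Finset.mem_filter.2 ⟨mem_lcbSet.2 ⟨(Fin.pos_iff_ne_zero' _).2 hm0,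
        b, c, zero_mem_ins2.2 rfl, hmem, hmax, hcb⟩, rfl⟩
    · intro c1 hc1 c2 hc2 heq
      have e : (ins2 b B c1).max' (hne c1) = (ins2 b B c2).max' (hne c2) :=
        congrArg Prod.snd heq
      have h1m : (ins2 b B c1).max' (hne c1) ∈ ins2 b B c1 := Finset.max'_mem _ _
      have h2m : (ins2 b B c1).max' (hne c1) ∈ ins2 b B c2 := by
        rw [e]; exact Finset.max'_mem _ _
      exact OP_block_unique (ins2_mem_OP hB) h1m h2m
    · intro ij hij
      obtain ⟨hijS, hij0⟩ := Finset.mem_filter.1 hij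
      obtain ⟨hlt, a, c, hm1, hm2, hm3, hca⟩ := mem_lcbSet.1 hijS
      have ha : a = b := zero_mem_ins2.1 (hij0 ▸ hm1)
      refine ⟨c, Finset.mem_Iio.2 (ha ▸ hca), ?_⟩
      have hcoe : (↑((ins2 b B c).max' (hne c)) : WithBot (Fin (n+1))) = ↑ij.2 := by
        rw [Finset.coe_max' (hne c), hm3]
      exact Prod.ext hij0.symm (WithBot.coe_injective hcoe)
  have h2 : ((lcbSet (ins2 b B)).filter fun ij => ¬ij.1 = 0).card = (lcbSet B).card := by
    refine (Finset.card_bij (fun ij _ => (ij.1.succ, ij.2.succ)) ?_ ?_ ?_).symm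
    · intro ij hij
      obtain ⟨hlt, a, c, hm1, hm2, hm3, hca⟩ := mem_lcbSet.1 hij
      exact Finset.mem_filter.2 ⟨mem_lcbSet.2 ⟨Fin.succ_lt_succ_iff.2 hlt, a, c,
        succ_mem_ins2.2 hm1, succ_mem_ins2.2 hm2, max_ins2.2 hm3, hca⟩, Fin.succ_ne_zero _⟩
    · intro p1 _ p2 _ heq
      exact Prod.ext (Fin.succ_inj.1 (congrArg Prod.fst heq))
        (Fin.succ_inj.1 (congrArg Prod.snd heq))
    · intro ij hij
      obtain ⟨hijS, hij0⟩ := Finset.mem_filter.1 hij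
      obtain ⟨hlt, a, c, hm1, hm2, hm3, hca⟩ := mem_lcbSet.1 hijS
      obtain ⟨x, hx⟩ := Fin.exists_succ_eq_of_ne_zero hij0
      have hij2 : ij.2 ≠ 0 :=
        (Fin.pos_iff_ne_zero' ij.2).1 (lt_of_le_of_lt (Fin.zero_le ij.1) hlt)
      obtain ⟨y, hy⟩ := Fin.exists_succ_eq_of_ne_zero hij2
      have hlt' : x < y := by
        rw [← Fin.succ_lt_succ_iff, hx, hy]; exact hlt
      have hm1' : x ∈ B a := succ_mem_ins2.1 (by rw [hx]; exact hm1)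
      have hm2' : y ∈ B c := succ_mem_ins2.1 (by rw [hy]; exact hm2)
      have hm3' : (B c).max = ↑y := by
        rw [← hy] at hm3
        exact max_ins2.1 hm3
      exact ⟨(x, y), mem_lcbSet.2 ⟨hlt', a, c, hm1', hm2', hm3', hca⟩, Prod.ext hx hy⟩
  omega

lemma lcb_ins1 {b : Fin (k+1)} {B : Fin k → Finset (Fin n)} (hB : B ∈ OP n k) :
    lcb (ins1 b B) = lcb B + (b : ℕ) := by
  classical
  have hne : ∀ j, (ins1 b B j).Nonempty := (mem_OP.1 (ins1_mem_OP (b := b) hB)).1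
  rw [lcb_eq, lcb_eq,
    ← Finset.card_filter_add_card_filter_not (s := lcbSet (ins1 b B))
      (p := fun ij => ij.1 = 0)]
  have h1 : ((lcbSet (ins1 b B)).filter fun ij => ij.1 = 0).card = (b : ℕ) := by
    rw [← Fin.card_Iio b]
    refine (Finset.card_bij (fun c _ => ((0 : Fin (n+1)), (ins1 b B c).max' (hne c)))
      ?_ ?_ ?_).symm
    · intro c hc
      have hcb : c < b := Finset.mem_Iio.1 hc
      have hmem : (ins1 b B c).max' (hne c) ∈ ins1 b B c := Finset.max'_mem _ _
      have hmax : (ins1 b B c).max = ↑((ins1 b B c).max' (hne c)) :=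
        (Finset.coe_max' (hne c)).symm
      have hm0 : (ins1 b B c).max' (hne c) ≠ 0 := by
        intro h
        rw [h] at hmem
        exact absurd (zero_mem_ins1.1 hmem) (ne_of_lt hcb)
      refine Finset.mem_filter.2 ⟨mem_lcbSet.2 ⟨(Fin.pos_iff_ne_zero' _).2 hm0,
        b, c, zero_mem_ins1.2 rfl, hmem, hmax, hcb⟩, rfl⟩
    · intro c1 hc1 c2 hc2 heq
      have e : (ins1 b B c1).max' (hne c1) = (ins1 b B c2).max' (hne c2) :=
        congrArg Prod.snd heq
      have h1m : (ins1 b B c1).max' (hne c1) ∈ ins1 b B c1 := Finset.max'_mem _ _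
      have h2m : (ins1 b B c1).max' (hne c1) ∈ ins1 b B c2 := by
        rw [e]; exact Finset.max'_mem _ _
      exact OP_block_unique (ins1_mem_OP hB) h1m h2m
    · intro ij hij
      obtain ⟨hijS, hij0⟩ := Finset.mem_filter.1 hij
      obtain ⟨hlt, a, c, hm1, hm2, hm3, hca⟩ := mem_lcbSet.1 hijS
      have ha : a = b := zero_mem_ins1.1 (hij0 ▸ hm1)
      refine ⟨c, Finset.mem_Iio.2 (ha ▸ hca), ?_⟩
      have hcoe : (↑((ins1 b B c).max' (hne c)) : WithBot (Fin (n+1))) = ↑ij.2 := by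
        rw [Finset.coe_max' (hne c), hm3]
      exact Prod.ext hij0.symm (WithBot.coe_injective hcoe)
  have h2 : ((lcbSet (ins1 b B)).filter fun ij => ¬ij.1 = 0).card = (lcbSet B).card := by
    refine (Finset.card_bij (fun ij _ => (ij.1.succ, ij.2.succ)) ?_ ?_ ?_).symm
    · intro ij hij
      obtain ⟨hlt, a, c, hm1, hm2, hm3, hca⟩ := mem_lcbSet.1 hij
      exact Finset.mem_filter.2 ⟨mem_lcbSet.2 ⟨Fin.succ_lt_succ_iff.2 hlt,
        b.succAbove a, b.succAbove c,
        succ_mem_ins1.2 hm1, succ_mem_ins1.2 hm2, max_ins1.2 hm3,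
        Fin.succAbove_lt_succAbove_iff.2 hca⟩, Fin.succ_ne_zero _⟩
    · intro p1 _ p2 _ heq
      exact Prod.ext (Fin.succ_inj.1 (congrArg Prod.fst heq))
        (Fin.succ_inj.1 (congrArg Prod.snd heq))
    · intro ij hij
      obtain ⟨hijS, hij0⟩ := Finset.mem_filter.1 hij
      obtain ⟨hlt, a, c, hm1, hm2, hm3, hca⟩ := mem_lcbSet.1 hijS
      obtain ⟨x, hx⟩ := Fin.exists_succ_eq_of_ne_zero hij0
      have hij2 : ij.2 ≠ 0 :=
        (Fin.pos_iff_ne_zero' ij.2).1 (lt_of_le_of_lt (Fin.zero_le ij.1) hlt)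
      obtain ⟨y, hy⟩ := Fin.exists_succ_eq_of_ne_zero hij2
      have hlt' : x < y := by
        rw [← Fin.succ_lt_succ_iff, hx, hy]; exact hlt
      have hane : a ≠ b := by
        intro h
        rw [h] at hm1
        exact succ_notMem_ins1_same (hx ▸ hm1)
      obtain ⟨a0, rfl⟩ := Fin.exists_succAbove_eq hane
      have hcne : c ≠ b := by
        intro h
        rw [h] at hm2
        exact succ_notMem_ins1_same (hy ▸ hm2)
      obtain ⟨c0, rfl⟩ := Fin.exists_succAbove_eq hcne
      have hm1' : x ∈ B a0 := succ_mem_ins1.1 (by rw [hx]; exact hm1)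
      have hm2' : y ∈ B c0 := succ_mem_ins1.1 (by rw [hy]; exact hm2)
      have hm3' : (B c0).max = ↑y := by
        rw [← hy] at hm3
        exact max_ins1.1 hm3
      exact ⟨(x, y), mem_lcbSet.2 ⟨hlt', a0, c0, hm1', hm2', hm3',
        Fin.succAbove_lt_succAbove_iff.1 hca⟩, Prod.ext hx hy⟩
  omega

/-! ### summation bijections -/

lemma sum_ins1 (n k : ℕ) [DecidablePred fun B : Fin (k+1) → Finset (Fin (n+1)) => ∃ j, B j = {0}] :
    ∑ B ∈ (OP (n+1) (k+1)).filter (fun B => ∃ j, B j = {0}), qq ^ lcb B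
      = ∑ p ∈ (Finset.univ ×ˢ OP n k : Finset (Fin (k+1) × (Fin k → Finset (Fin n)))),
          qq ^ (lcb p.2 + (p.1 : ℕ)) := by
  refine (Finset.sum_bij (fun p _ => ins1 p.1 p.2) ?_ ?_ ?_ ?_).symm
  · intro p hp
    exact Finset.mem_filter.2 ⟨ins1_mem_OP (Finset.mem_product.1 hp).2, ⟨p.1, ins1_apply_same⟩⟩
  · rintro ⟨b1, B1⟩ hp1 ⟨b2, B2⟩ hp2 heq
    replace heq : ins1 b1 B1 = ins1 b2 B2 := heq
    have hb : b1 = b2 := by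
      have h0 : (0 : Fin (n+1)) ∈ ins1 b2 B2 b1 := by
        rw [← heq]; exact zero_mem_ins1.2 rfl
      exact zero_mem_ins1.1 h0
    subst hb
    have hB : B1 = B2 := by
      funext i
      have h := congrFun heq (b1.succAbove i)
      rw [ins1_apply_succAbove, ins1_apply_succAbove] at h
      exact Finset.map_injective _ h
    rw [Prod.mk.injEq]
    exact ⟨rfl, hB⟩
  · intro B hBf
    obtain ⟨hBOP, b, hb⟩ := Finset.mem_filter.1 hBf
    obtain ⟨hne, hcov⟩ := mem_OP.1 hBOP
    have h0b : (0 : Fin (n+1)) ∈ B b := by rw [hb]; exact Finset.mem_singleton_self 0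
    have h0 : ∀ i : Fin k, (0 : Fin (n+1)) ∉ B (b.succAbove i) := fun i h =>
      Fin.succAbove_ne b i (OP_block_unique hBOP h h0b)
    set C : Fin k → Finset (Fin n) :=
      fun i => Finset.univ.filter fun x => x.succ ∈ B (b.succAbove i) with hC
    have hmap : ∀ i, (C i).map (Fin.succEmb n) = B (b.succAbove i) := by
      intro i
      ext x
      simp only [Finset.mem_map, hC, Finset.mem_filter, Finset.mem_univ, true_and, succEmb_apply]
      constructor
      · rintro ⟨y, hy, rfl⟩; exact hy
      · intro hx
        have hx0 : x ≠ 0 := fun h => h0 i (h ▸ hx)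
        obtain ⟨y, rfl⟩ := Fin.exists_succ_eq_of_ne_zero hx0
        exact ⟨y, hx, rfl⟩
    have hCOP : C ∈ OP n k := by
      refine mem_OP.2 ⟨fun i => ?_, fun y => ?_⟩
      · obtain ⟨x, hx⟩ := hne (b.succAbove i)
        have hx0 : x ≠ 0 := fun h => h0 i (h ▸ hx)
        obtain ⟨y, rfl⟩ := Fin.exists_succ_eq_of_ne_zero hx0
        exact ⟨y, Finset.mem_filter.2 ⟨Finset.mem_univ _, hx⟩⟩
      · obtain ⟨a, ha, huniq⟩ := hcov y.succ
        have hab : a ≠ b := by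
          intro h
          rw [h, hb, Finset.mem_singleton] at ha
          exact Fin.succ_ne_zero y ha
        obtain ⟨i0, rfl⟩ := Fin.exists_succAbove_eq hab
        refine ⟨i0, Finset.mem_filter.2 ⟨Finset.mem_univ _, ha⟩, fun j' hj' => ?_⟩
        exact Fin.succAbove_right_injective (huniq _ (Finset.mem_filter.1 hj').2)
    refine ⟨(b, C), Finset.mem_product.2 ⟨Finset.mem_univ _, hCOP⟩, ?_⟩
    show ins1 b C = B
    funext j
    rcases eq_or_ne j b with rfl | h
    · rw [ins1_apply_same, hb]
    · obtain ⟨i, rfl⟩ := Fin.exists_succAbove_eq h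
      rw [ins1_apply_succAbove, hmap]
  · intro p hp
    rw [lcb_ins1 (Finset.mem_product.1 hp).2]

lemma sum_ins2 (n k : ℕ) [DecidablePred fun B : Fin (k+1) → Finset (Fin (n+1)) => ∃ j, B j = {0}] :
    ∑ B ∈ (OP (n+1) (k+1)).filter (fun B => ¬∃ j, B j = {0}), qq ^ lcb B
      = ∑ p ∈ (Finset.univ ×ˢ OP n (k+1) : Finset (Fin (k+1) × (Fin (k+1) → Finset (Fin n)))),
          qq ^ (lcb p.2 + (p.1 : ℕ)) := by
  refine (Finset.sum_bij (fun p _ => ins2 p.1 p.2) ?_ ?_ ?_ ?_).symm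
  · intro p hp
    have hp2 := (Finset.mem_product.1 hp).2
    refine Finset.mem_filter.2 ⟨ins2_mem_OP hp2, ?_⟩
    rintro ⟨j, hj⟩
    replace hj : ins2 p.1 p.2 j = {0} := hj
    obtain ⟨y, hy⟩ := (mem_OP.1 hp2).1 j
    have hmem : y.succ ∈ ins2 p.1 p.2 j := succ_mem_ins2.2 hy
    rw [hj, Finset.mem_singleton] at hmem
    exact Fin.succ_ne_zero y hmem
  · rintro ⟨b1, B1⟩ hp1 ⟨b2, B2⟩ hp2 heq
    replace heq : ins2 b1 B1 = ins2 b2 B2 := heq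
    have hb : b1 = b2 := by
      have h0 : (0 : Fin (n+1)) ∈ ins2 b2 B2 b1 := by
        rw [← heq]; exact zero_mem_ins2.2 rfl
      exact zero_mem_ins2.1 h0
    subst hb
    have hB : B1 = B2 := by
      funext i
      ext y
      rw [← succ_mem_ins2 (b := b1) (B := B1), heq, succ_mem_ins2]
    rw [Prod.mk.injEq]
    exact ⟨rfl, hB⟩
  · intro B hBf
    obtain ⟨hBOP, hnsing⟩ := Finset.mem_filter.1 hBf
    obtain ⟨hne, hcov⟩ := mem_OP.1 hBOP
    obtain ⟨b, h0b, -⟩ := hcov 0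
    set C : Fin (k+1) → Finset (Fin n) :=
      fun i => Finset.univ.filter fun x => x.succ ∈ B i with hC
    have hCOP : C ∈ OP n (k+1) := by
      refine mem_OP.2 ⟨fun i => ?_, fun y => ?_⟩
      · rcases eq_or_ne i b with h | h
        · rw [h]
          have hBb : B b ≠ {0} := fun h => hnsing ⟨b, h⟩
          have hex : ∃ x ∈ B b, x ≠ 0 := by
            by_contra hcon
            push_neg at hcon
            exact hBb (Finset.eq_singleton_iff_unique_mem.2 ⟨h0b, fun x hx => hcon x hx⟩)
          obtain ⟨x, hx, hx0⟩ := hex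
          obtain ⟨y, rfl⟩ := Fin.exists_succ_eq_of_ne_zero hx0
          exact ⟨y, Finset.mem_filter.2 ⟨Finset.mem_univ _, hx⟩⟩
        · obtain ⟨x, hx⟩ := hne i
          have hx0 : x ≠ 0 := fun he => h (OP_block_unique hBOP (he ▸ hx) h0b)
          obtain ⟨y, rfl⟩ := Fin.exists_succ_eq_of_ne_zero hx0
          exact ⟨y, Finset.mem_filter.2 ⟨Finset.mem_univ _, hx⟩⟩
      · obtain ⟨a, ha, huniq⟩ := hcov y.succ
        exact ⟨a, Finset.mem_filter.2 ⟨Finset.mem_univ _, ha⟩,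
          fun j' hj' => huniq j' (Finset.mem_filter.1 hj').2⟩
    refine ⟨(b, C), Finset.mem_product.2 ⟨Finset.mem_univ _, hCOP⟩, ?_⟩
    show ins2 b C = B
    funext j
    ext x
    rcases eq_or_ne x 0 with rfl | hx0
    · rw [zero_mem_ins2]
      constructor
      · rintro rfl; exact h0b
      · intro h; exact OP_block_unique hBOP h h0b
    · obtain ⟨y, rfl⟩ := Fin.exists_succ_eq_of_ne_zero hx0
      rw [succ_mem_ins2]
      simp [hC]
  · intro p hp
    rw [lcb_ins2 (Finset.mem_product.1 hp).2]

lemma M_rec (n k : ℕ) :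
    ∑ B ∈ OP (n+1) (k+1), qq ^ lcb B
      = qint (k+1) * (∑ B ∈ OP n k, qq ^ lcb B)
        + qint (k+1) * (∑ B ∈ OP n (k+1), qq ^ lcb B) := by
  classical
  rw [← Finset.sum_filter_add_sum_filter_not (OP (n+1) (k+1)) (fun B => ∃ j, B j = {0})]
  rw [sum_ins1 n k, sum_ins2 n k, Finset.sum_product, Finset.sum_product]
  have e1 : ∀ b : Fin (k+1), ∑ B ∈ OP n k, qq ^ (lcb B + (b : ℕ))
      = (∑ B ∈ OP n k, qq ^ lcb B) * qq ^ (b : ℕ) := by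
    intro b
    rw [Finset.sum_mul]
    exact Finset.sum_congr rfl fun B _ => pow_add qq _ _
  have e2 : ∀ b : Fin (k+1), ∑ B ∈ OP n (k+1), qq ^ (lcb B + (b : ℕ))
      = (∑ B ∈ OP n (k+1), qq ^ lcb B) * qq ^ (b : ℕ) := by
    intro b
    rw [Finset.sum_mul]
    exact Finset.sum_congr rfl fun B _ => pow_add qq _ _
  rw [Finset.sum_congr rfl fun b _ => e1 b, Finset.sum_congr rfl fun b _ => e2 b,
    ← Finset.mul_sum, ← Finset.mul_sum]
  have hq : (∑ b : Fin (k+1), qq ^ (b : ℕ)) = qint (k+1) := by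
    rw [qint]
    exact Fin.sum_univ_eq_sum_range (fun i => qq ^ i) (k+1)
  rw [hq]
  ring

lemma OP_succ_zero (n : ℕ) : OP (n+1) 0 = ∅ := by
  rw [Finset.eq_empty_iff_forall_notMem]
  intro B hB
  obtain ⟨j, -, -⟩ := (mem_OP.1 hB).2 0
  exact j.elim0

lemma OP_zero_succ (k : ℕ) : OP 0 (k+1) = ∅ := by
  rw [Finset.eq_empty_iff_forall_notMem]
  intro B hB
  obtain ⟨x, -⟩ := (mem_OP.1 hB).1 0
  exact x.elim0

lemma OP_zero_zero : OP 0 0 = {fun _ => ∅} := by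
  apply Finset.eq_singleton_iff_unique_mem.2
  constructor
  · exact mem_OP.2 ⟨fun j => j.elim0, fun x => x.elim0⟩
  · intro B _
    funext j
    exact j.elim0

lemma key (n : ℕ) : ∀ k, (∑ B ∈ OP n k, qq ^ lcb B) * qq ^ (Nat.choose k 2) = TT n k := by
  induction n with
  | zero =>
    intro k
    cases k with
    | zero =>
      rw [OP_zero_zero, Finset.sum_singleton, TT_zero_zero]
      have : lcb (fun _ => (∅ : Finset (Fin 0)) : Fin 0 → Finset (Fin 0)) = 0 := by
        rw [lcb_eq, lcbSet, Finset.univ_eq_empty, Finset.filter_empty, Finset.card_empty]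
      rw [this]
      norm_num
    | succ k =>
      rw [OP_zero_succ, Finset.sum_empty, TT_zero_succ, zero_mul]
  | succ n ih =>
    intro k
    cases k with
    | zero =>
      rw [OP_succ_zero, Finset.sum_empty, zero_mul]
      rw [TT]
      simp [qbinom_zero, qint_zero, zero_pow]
    | succ k =>
      rw [M_rec n k, TT_rec n k, ← ih k, ← ih (k+1), choose_two_succ, pow_add]
      ring

end Comb

/-- `LCB = lcb + C(k,2)` is Euler-Mahonian on ordered partitions:
`∑_{π ∈ OP(n,k)} q^(LCB π) = [k]!·S_q[n,k]` for `0 ≤ k ≤ n`. -/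
theorem sum_LCB_eq (n k : ℕ) (hkn : k ≤ n) :
    ∑ B ∈ OP n k, qq ^ (lcb B + Nat.choose k 2) = qfac k * qStirling n k := by
  have h1 : ∑ B ∈ OP n k, qq ^ (lcb B + Nat.choose k 2)
      = (∑ B ∈ OP n k, qq ^ lcb B) * qq ^ (Nat.choose k 2) := by
    rw [Finset.sum_mul]
    exact Finset.sum_congr rfl fun B _ => pow_add qq _ _
  rw [h1, key n k, qStirling, if_pos hkn]
  rw [mul_div_assoc', mul_comm (qfac k), mul_div_assoc, div_self (qfac_ne_zero k), mul_one]
  rfl
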